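/- arXiv:2412.13622 — 2 statements merged into one kernel-verified Lean document; each statement's English description precedes it below -/
import Mathlib

section
/- For every instance I, the greedy choice function output Ch*(I) satisfies justified envy-freeness: there are no students s ∉ Ch*(I) and s' ∈ Ch*(I) with s ≻ s' such that the set (Ch*(I) ∪ {s}) \ {s'} satisfies both maximal diversity and balanced representation. -/
open Classical

/-- An instance `I = (S, q, ≻, T, τ, η)`: a finite set of students with a strict
total order (priority, modeled by a linear order where `s' < s` means `s ≻ s'`),
a positive capacity `q`, a finite set of types `T`, a type assignment `τ`, and
ranked quotas `η t j` for ranks `j ∈ {1,…,r}`. -/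
structure Inst where
  S : Type
  T : Type
  [fS : Fintype S]
  [dS : DecidableEq S]
  [lS : LinearOrder S]
  [fT : Fintype T]
  [dT : DecidableEq T]
  q : ℕ
  qpos : 0 < q
  r : ℕ
  τ : S → Finset T
  η : T → ℕ → ℕ

attribute [instance] Inst.fS Inst.dS Inst.lS Inst.fT Inst.dT

/-- `s ≻ s'` : student `s` has strictly higher priority than `s'`. -/
def Inst.prio (I : Inst) (s s' : I.S) : Prop := s' < s

/-- A (potential) reserved seat: a type (`none` = the general type `t₀`),
a rank, and an index. -/
abbrev SeatT (I : Inst) := Option I.T × ℕ × ℕ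

/-- The rank of a seat. -/
def seatRank (I : Inst) (v : SeatT I) : ℕ := v.2.1

/-- The type of a seat (`none` = general type `t₀`). -/
def seatType (I : Inst) (v : SeatT I) : Option I.T := v.1

/-- Seats actually present in the ranked reservation graph: for each type `t`, rank
`1 ≤ j ≤ r` and index `i < η t j` a seat, and `q` general seats of rank `r`. -/
def SeatValid (I : Inst) (v : SeatT I) : Prop :=
  match v.1 with
  | some t => 1 ≤ v.2.1 ∧ v.2.1 ≤ I.r ∧ v.2.2 < I.η t v.2.1
  | none => v.2.1 = I.r ∧ v.2.2 < I.q

/-- There is an edge between student `s` and a seat of type `t` iff `t ∈ τ s` or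
`t` is the general type `t₀`. -/
def EdgeOK (I : Inst) (s : I.S) (v : SeatT I) : Prop :=
  match v.1 with
  | some t => t ∈ I.τ s
  | none => True

/-- A matching in the ranked reservation graph: a set of edges of `G` in which
every student and every seat appears at most once. -/
def IsMatching (I : Inst) (M : Finset (I.S × SeatT I)) : Prop :=
  (∀ e ∈ M, SeatValid I e.2 ∧ EdgeOK I e.1 e.2) ∧
  (∀ e ∈ M, ∀ e' ∈ M, e.1 = e'.1 → e = e') ∧
  (∀ e ∈ M, ∀ e' ∈ M, e.2 = e'.2 → e = e')

/-- `S_M`: the set of students covered by the matching `M`. -/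
def covered (I : Inst) (M : Finset (I.S × SeatT I)) : Finset I.S := M.image Prod.fst

/-- `x_i`: the number of edges of rank `i` in `M` (the `i`-th entry of the
signature `ρ(M)`). -/
def sig (I : Inst) (M : Finset (I.S × SeatT I)) (i : ℕ) : ℕ :=
  (M.filter (fun e => seatRank I e.2 = i)).card

/-- `ρ(M) <lex ρ(M')` : the signature of `M'` is lexicographically strictly
better than that of `M`. -/
def SigLT (I : Inst) (M M' : Finset (I.S × SeatT I)) : Prop :=
  ∃ k, 1 ≤ k ∧ k ≤ I.r ∧ (∀ i, 1 ≤ i → i < k → sig I M i = sig I M' i) ∧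
    sig I M k < sig I M' k

/-- A matching of size at most `q` is rank-maximal if its signature is
lexicographically ≥ that of every matching of size at most `q`. -/
def RankMaximal (I : Inst) (M : Finset (I.S × SeatT I)) : Prop :=
  IsMatching I M ∧ M.card ≤ I.q ∧
    ∀ M', IsMatching I M' → M'.card ≤ I.q → ¬ SigLT I M M'

/-- `U`: the set of groups (type combinations actually occurring among students). -/
def groups (I : Inst) : Finset (Finset I.T) := Finset.univ.image I.τ

/-- `S_u`: the set of students of group `u`. -/
def Su (I : Inst) (u : Finset I.T) : Finset I.S :=
  Finset.univ.filter (fun s => I.τ s = u)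

/-- `|M_u|`: the number of students of group `u` covered by `M`. -/
def Mu (I : Inst) (M : Finset (I.S × SeatT I)) (u : Finset I.T) : ℕ :=
  ((covered I M).filter (fun s => I.τ s = u)).card

/-- `min_{u ∈ U} |M_u| / |S_u|` (as `WithTop ℚ`; it is `⊤` iff `U = ∅`). -/
noncomputable def minRatio (I : Inst) (M : Finset (I.S × SeatT I)) : WithTop ℚ :=
  ((groups I).image (fun u => ((Mu I M u : ℚ) / ((Su I u).card : ℚ)))).min

/-- `M` attains balanced representation: `M` is rank-maximal of size at most `q`
and maximizes `min_{u∈U} |M_u|/|S_u|` over all such matchings. -/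
def BalancedRep (I : Inst) (M : Finset (I.S × SeatT I)) : Prop :=
  RankMaximal I M ∧ ∀ M', RankMaximal I M' → minRatio I M' ≤ minRatio I M

/-- The greedy choice function `Ch*`: process the students in decreasing order of
priority, adding the current student `s` whenever some matching of size at most `q`
that is rank-maximal and attains balanced representation covers `S* ∪ {s}`. -/
noncomputable def ChStar (I : Inst) : Finset I.S :=
  ((Finset.sort (Finset.univ : Finset I.S) (· ≤ ·)).reverse).foldl
    (fun A s =>
      if ∃ M, BalancedRep I M ∧ insert s A ⊆ covered I M then insert s A else A) ∅

/-- Non-wastefulness of a chosen set: `|S*| = min (|S|, q)`. -/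
def NonWasteful (I : Inst) (A : Finset I.S) : Prop :=
  A.card = min (Fintype.card I.S) I.q

/-- Maximal diversity of a chosen set: some rank-maximal matching of size at most
`q` covers only students of `S*`. -/
def MaxDiversity (I : Inst) (A : Finset I.S) : Prop :=
  ∃ M, RankMaximal I M ∧ covered I M ⊆ A

/-- Balanced representation of a chosen set: some matching in `𝕄` attaining
balanced representation covers all of `S*`. -/
def BalancedRepSet (I : Inst) (A : Finset I.S) : Prop :=
  ∃ M, BalancedRep I M ∧ A ⊆ covered I M

/-- Justified envy-freeness: no `s ∉ S*`, `s' ∈ S*` with `s ≻ s'` such that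
`(S* ∪ {s}) \ {s'}` satisfies both maximal diversity and balanced representation. -/
def JEF (I : Inst) (A : Finset I.S) : Prop :=
  ¬ ∃ s s', s ∉ A ∧ s' ∈ A ∧ I.prio s s' ∧
    MaxDiversity I (insert s A \ {s'}) ∧ BalancedRepSet I (insert s A \ {s'})

/-- `I` is valid w.r.t. a target vector `δ`: some rank-maximal matching of size at
most `q` has `|M_u| ≥ δ_u` for every group `u ∈ U`. -/
def ValidWrt (I : Inst) (δ : Finset I.T → ℕ) : Prop :=
  ∃ M, RankMaximal I M ∧ ∀ u ∈ groups I, δ u ≤ Mu I M u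

/-- The max-min ratio `α(I)`: the maximum over rank-maximal matchings `M` of
size at most `q` of `min_{u∈U} |M_u|/|S_u|`. -/
noncomputable def alphaQ (I : Inst) : ℚ :=
  let cands : Finset ℚ :=
    ((Finset.Icc 0 (Fintype.card I.S)) ×ˢ groups I).image
      (fun p => (p.1 : ℚ) / ((Su I p.2).card : ℚ))
  WithBot.unbotD 0 ((cands.filter
      (fun x : ℚ => ∃ M, RankMaximal I M ∧ minRatio I M = (x : WithTop ℚ))).max)

/-- The crucial vector `δ*` : `δ*_u = ⌊α(I)·|S_u|⌋`. -/
noncomputable def deltaStar (I : Inst) (u : Finset I.T) : ℕ :=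
  ⌊alphaQ I * ((Su I u).card : ℚ)⌋₊

/-- The `k` highest-priority students of `A`. -/
def topK (I : Inst) (A : Finset I.S) (k : ℕ) : Finset I.S :=
  A.filter (fun s => (A.filter (fun s' => s ≤ s')).card ≤ k)

/-! ### The flow network -/

/-- Nodes of the flow network: `Sum.inl 0` = source `a`, `Sum.inl 1` = sink `b`,
`Sum.inl 2` = the capacity node `Q`; group nodes, type nodes (`none` = `t₀`),
and rank nodes `t^i` (rank value `i+1` for `i : Fin r`). -/
abbrev Node (I : Inst) := Fin 3 ⊕ Finset I.T ⊕ Option I.T ⊕ (Option I.T × Fin I.r)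

def nSrc (I : Inst) : Node I := Sum.inl 0
def nSink (I : Inst) : Node I := Sum.inl 1
def nQ (I : Inst) : Node I := Sum.inl 2
def nGrp (I : Inst) (u : Finset I.T) : Node I := Sum.inr (Sum.inl u)
def nTyp (I : Inst) (t : Option I.T) : Node I := Sum.inr (Sum.inr (Sum.inl t))
def nRnk (I : Inst) (t : Option I.T) (i : Fin I.r) : Node I :=
  Sum.inr (Sum.inr (Sum.inr (t, i)))

/-- Quotas including the general type: `η_{t₀}^r = q` and `η_{t₀}^j = 0` for `j < r`. -/
def ηgen (I : Inst) (t : Option I.T) (j : ℕ) : ℕ :=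
  match t with
  | some t => I.η t j
  | none => if j = I.r then I.q else 0

/-- Capacities of the flow network (capacity `0` = no edge). -/
def cap (I : Inst) : Node I → Node I → ℕ := fun x y =>
  match x, y with
  | Sum.inl a, Sum.inl b => if a = 2 ∧ b = 1 then I.q else 0
  | Sum.inl a, Sum.inr (Sum.inl u) => if a = 0 then (Su I u).card else 0
  | Sum.inr (Sum.inl u), Sum.inr (Sum.inr (Sum.inl (some t))) =>
      ((Su I u).filter (fun s => t ∈ I.τ s)).card
  | Sum.inr (Sum.inl u), Sum.inr (Sum.inr (Sum.inl none)) => (Su I u).card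
  | Sum.inr (Sum.inr (Sum.inl t)), Sum.inr (Sum.inr (Sum.inr (t', i))) =>
      if t = t' then ηgen I t' ((i : ℕ) + 1) else 0
  | Sum.inr (Sum.inr (Sum.inr (t, i))), Sum.inl a =>
      if a = 2 then ηgen I t ((i : ℕ) + 1) else 0
  | _, _ => 0

/-- Costs of the flow network: the edge `t → t^i` has cost equal to the rank
`i+1`; all other edges have cost `0`. -/
def cost (I : Inst) : Node I → Node I → ℕ := fun x y =>
  match x, y with
  | Sum.inr (Sum.inr (Sum.inl t)), Sum.inr (Sum.inr (Sum.inr (t', i))) =>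
      if t = t' then (i : ℕ) + 1 else 0
  | _, _ => 0

/-- A flow: nonnegative, within capacities, and conserved at every node other
than the source and the sink. -/
def IsFlow (I : Inst) (f : Node I → Node I → ℝ) : Prop :=
  (∀ x y, 0 ≤ f x y) ∧ (∀ x y, f x y ≤ (cap I x y : ℝ)) ∧
  (∀ x : Node I, x ≠ nSrc I → x ≠ nSink I → (∑ y, f y x) = ∑ y, f x y)

/-- The value of a flow: `Σ_u f(a, u)`. -/
noncomputable def flowVal (I : Inst) (f : Node I → Node I → ℝ) : ℝ :=
  ∑ u : Finset I.T, f (nSrc I) (nGrp I u)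

/-- The cost of a flow: `Σ_e cost(e) · f(e)`. -/
noncomputable def flowCost (I : Inst) (f : Node I → Node I → ℝ) : ℝ :=
  ∑ x : Node I, ∑ y : Node I, (cost I x y : ℝ) * f x y

/-- A maximum flow. -/
def IsMaxFlow (I : Inst) (f : Node I → Node I → ℝ) : Prop :=
  IsFlow I f ∧ ∀ g, IsFlow I g → flowVal I g ≤ flowVal I f

/-- A minimum-cost maximum flow. -/
def IsMinCostMaxFlow (I : Inst) (f : Node I → Node I → ℝ) : Prop :=
  IsMaxFlow I f ∧ ∀ g, IsMaxFlow I g → flowCost I f ≤ flowCost I g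

/-- The flow `f_M` induced by a matching `M`. -/
noncomputable def inducedFlow (I : Inst) (M : Finset (I.S × SeatT I)) :
    Node I → Node I → ℝ := fun x y =>
  match x, y with
  | Sum.inl a, Sum.inl b => if a = 2 ∧ b = 1 then (M.card : ℝ) else 0
  | Sum.inl a, Sum.inr (Sum.inl u) => if a = 0 then (Mu I M u : ℝ) else 0
  | Sum.inr (Sum.inl u), Sum.inr (Sum.inr (Sum.inl t)) =>
      ((M.filter (fun e => I.τ e.1 = u ∧ seatType I e.2 = t)).card : ℝ)
  | Sum.inr (Sum.inr (Sum.inl t)), Sum.inr (Sum.inr (Sum.inr (t', i))) =>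
      if t = t' then
        ((M.filter (fun e => seatType I e.2 = t ∧ seatRank I e.2 = (i : ℕ) + 1)).card : ℝ)
      else 0
  | Sum.inr (Sum.inr (Sum.inr (t, i))), Sum.inl a =>
      if a = 2 then
        ((M.filter (fun e => seatType I e.2 = t ∧ seatRank I e.2 = (i : ℕ) + 1)).card : ℝ)
      else 0
  | _, _ => 0

/-! ### Alternating and augmenting paths -/

/-- The edge set of a path encoded by its list of students `a₀,…` and list of
seats `v₀,…` (edges `(aₖ, vₖ)` and `(aₖ₊₁, vₖ)`). -/
def edgesOf (I : Inst) (students : List I.S) (seats : List (SeatT I)) :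
    Finset (I.S × SeatT I) :=
  (students.zip seats).toFinset ∪ (students.tail.zip seats).toFinset

/-- Symmetric difference `M ⊕ P = (M \ P) ∪ (P \ M)`. -/
def symmDiffM (I : Inst) (M P : Finset (I.S × SeatT I)) : Finset (I.S × SeatT I) :=
  (M \ P) ∪ (P \ M)

/-- An alternating path w.r.t. `M` from an uncovered student to a covered student:
students `a₀, …, aₙ` and seats `v₀, …, vₙ₋₁`, with `(aₖ, vₖ) ∉ M` edges of `G`
and `(aₖ₊₁, vₖ) ∈ M`. -/
structure AltPath (I : Inst) (M : Finset (I.S × SeatT I)) where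
  students : List I.S
  seats : List (SeatT I)
  len : students.length = seats.length + 1
  nodupS : students.Nodup
  nodupV : seats.Nodup
  notM : ∀ e ∈ students.zip seats, e ∉ M ∧ SeatValid I e.2 ∧ EdgeOK I e.1 e.2
  inM : ∀ e ∈ students.tail.zip seats, e ∈ M

/-- The edge set of an alternating path. -/
def AltPath.edges {I : Inst} {M : Finset (I.S × SeatT I)} (P : AltPath I M) :
    Finset (I.S × SeatT I) :=
  edgesOf I P.students P.seats

/-- An augmenting path w.r.t. `M` from an uncovered student to an uncovered seat:
students `a₀, …, aₙ` and seats `v₀, …, vₙ`, with `(aₖ, vₖ) ∉ M` edges of `G`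
and `(aₖ₊₁, vₖ) ∈ M`. -/
structure AugPath (I : Inst) (M : Finset (I.S × SeatT I)) where
  students : List I.S
  seats : List (SeatT I)
  len : students.length = seats.length
  nodupS : students.Nodup
  nodupV : seats.Nodup
  notM : ∀ e ∈ students.zip seats, e ∉ M ∧ SeatValid I e.2 ∧ EdgeOK I e.1 e.2
  inM : ∀ e ∈ students.tail.zip seats, e ∈ M

/-- The edge set of an augmenting path. -/
def AugPath.edges {I : Inst} {M : Finset (I.S × SeatT I)} (P : AugPath I M) :
    Finset (I.S × SeatT I) :=
  edgesOf I P.students P.seats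

/-- The instance obtained from `I` by restricting the student set to `X`. -/
@[reducible] def restrict (I : Inst) (X : Finset I.S) : Inst :=
  { S := {s : I.S // s ∈ X}
    T := I.T
    fS := inferInstance
    dS := inferInstance
    lS := inferInstance
    fT := I.fT
    dT := I.dT
    q := I.q
    qpos := I.qpos
    r := I.r
    τ := fun s => I.τ s.1
    η := I.η }

/-!
Students are offered in decreasing priority, so when `s` was rejected the greedy set consisted
only of students above `s`, hence above `s'`, and was contained in `Ch*(I)`. Balanced
representation of a set passes to its subsets, so a set witnessing the envy of `s` towards `s'`
would also have admitted `s` at that moment.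
-/

section Greedy

variable {α : Type*} [DecidableEq α] (P : Finset α → Prop) [DecidablePred P]

def greedyStep (A : Finset α) (a : α) : Finset α :=
  if P (insert a A) then insert a A else A

def greedy (l : List α) : Finset α :=
  l.foldl (greedyStep P) ∅

variable {P}

theorem subset_greedyStep (A : Finset α) (a : α) : A ⊆ greedyStep P A a := by
  unfold greedyStep
  split_ifs
  exacts [Finset.subset_insert a A, subset_rfl]

theorem greedyStep_subset_insert (A : Finset α) (a : α) : greedyStep P A a ⊆ insert a A := by
  unfold greedyStep
  split_ifs
  exacts [subset_rfl, Finset.subset_insert a A]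

theorem subset_foldl_greedyStep (l : List α) (A : Finset α) :
    A ⊆ l.foldl (greedyStep P) A := by
  induction l generalizing A with
  | nil => exact subset_rfl
  | cons a l ih => exact (subset_greedyStep A a).trans (ih _)

theorem foldl_greedyStep_subset (l : List α) (A : Finset α) :
    l.foldl (greedyStep P) A ⊆ A ∪ l.toFinset := by
  induction l generalizing A with
  | nil => simp
  | cons a l ih =>
    calc _ ⊆ greedyStep P A a ∪ l.toFinset := ih _
      _ ⊆ insert a A ∪ l.toFinset :=
        Finset.union_subset_union_left (greedyStep_subset_insert A a)
      _ = A ∪ (a :: l).toFinset := by simp [Finset.insert_union, Finset.union_insert]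

theorem greedy_subset (l : List α) : greedy P l ⊆ l.toFinset := by
  simpa [greedy] using foldl_greedyStep_subset (P := P) l ∅

theorem exists_subset_greedy_not_insert {r : α → α → Prop} {l : List α} (hl : l.Pairwise r)
    {a : α} (ha : a ∈ l) (ha' : a ∉ greedy P l) :
    ∃ B ⊆ greedy P l, (∀ b ∈ B, r b a) ∧ ¬ P (insert a B) := by
  obtain ⟨l₁, l₂, rfl⟩ := List.append_of_mem ha
  have hsplit : greedy P (l₁ ++ a :: l₂) =
      l₂.foldl (greedyStep P) (greedyStep P (greedy P l₁) a) := by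
    rw [greedy, List.foldl_append, List.foldl_cons, greedy]
  refine ⟨greedy P l₁, ?_, fun b hb => ?_, fun hP => ha' ?_⟩
  · rw [hsplit]
    exact (subset_greedyStep _ a).trans (subset_foldl_greedyStep _ _)
  · exact (List.pairwise_append.1 hl).2.2 b (List.mem_toFinset.1 (greedy_subset l₁ hb)) a
      List.mem_cons_self
  · rw [hsplit]
    apply subset_foldl_greedyStep
    simp [greedyStep, hP]

end Greedy

theorem BalancedRepSet.mono {I : Inst} {A B : Finset I.S} (hAB : A ⊆ B)
    (hB : BalancedRepSet I B) : BalancedRepSet I A :=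
  let ⟨M, hM, hBM⟩ := hB
  ⟨M, hM, hAB.trans hBM⟩

theorem chStar_eq_greedy (I : Inst) :
    ChStar I = greedy (BalancedRepSet I) ((Finset.univ : Finset I.S).sort (· ≤ ·)).reverse :=
  rfl

/-- `Ch*(I)` satisfies justified envy-freeness. -/
theorem chStar_JEF (I : Inst) : JEF I (ChStar I) := by
  rintro ⟨s, s', hs, -, hs's, -, hBR⟩
  rw [chStar_eq_greedy] at hs hBR
  have hsorted :
      ((Finset.univ : Finset I.S).sort (· ≤ ·)).reverse.Pairwise (fun a b => b ≤ a) :=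
    List.pairwise_reverse.2 (Finset.pairwise_sort _ _)
  obtain ⟨B, hBG, hBs, hB⟩ := exists_subset_greedy_not_insert hsorted (by simp) hs
  have hs'B : s' ∉ B := fun h => (hBs s' h).not_gt hs's
  refine hB (hBR.mono ?_)
  intro x hx
  rcases Finset.mem_insert.1 hx with rfl | hx
  · simpa using hs's.ne'
  · simpa [hBG hx] using ne_of_mem_of_not_mem hx hs'B
end

section
/- For every instance I, there exists a subset S* ⊆ S with |S*| ≤ q satisfying non-wastefulness, maximal diversity, balanced representation, and justified envy-freeness. -/
open Classical

/-!
Choose, among the matchings attaining balanced representation, one that maximizes the total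
priority rank `∑_{s ∈ S_M} #{x | x ≤ s}` of the students it covers, and let `S*` be the set of
those students. Such matchings exist because there are finitely many matchings and
rank-maximality is maximality of the signature in the lexicographic order. Enlarging a matching
of `𝕄` within size `q` keeps it in `𝕄` (the signature and every `|M_u|` only grow), so if fewer
than `min(|S|, q)` students were covered, an unmatched student could take a free general seat
and raise the weight. A justified-envy pair `s ≻ s'` would give a matching of `𝕄` covering
`(S* ∪ {s}) \ {s'}`, whose weight exceeds that of `S*`.
-/

open Finset

lemma sum_lt_sum_exchange {α β : Type*} [DecidableEq α] [AddCommMonoid β] [PartialOrder β]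
    [IsOrderedCancelAddMonoid β] {f : α → β} {A : Finset α} {a b : α}
    (ha : a ∉ A) (hb : b ∈ A) (hf : f b < f a) :
    ∑ x ∈ A, f x < ∑ x ∈ insert a A \ {b}, f x := by
  have hab : a ≠ b := fun h => ha (h ▸ hb)
  rw [sdiff_singleton_eq_erase, erase_insert_of_ne hab,
    sum_insert fun h => ha (mem_of_mem_erase h), ← add_sum_erase A f hb]
  exact add_lt_add_left hf _

def seats (I : Inst) : Finset (SeatT I) :=
  univ.biUnion fun t => (range (I.r + 1)).biUnion fun j =>
    (range (ηgen I t j)).image fun i => (t, j, i)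

/-- The signature `ρ(M)` in a lexicographically ordered type; `Fin r` is `0`-indexed, so
entry `i` is `x_{i+1}`. -/
def sigLex (I : Inst) (M : Finset (I.S × SeatT I)) : Lex (Fin I.r → ℕ) :=
  toLex fun i => sig I M (i + 1)

def prioRank (I : Inst) (s : I.S) : ℕ := #{x | x ≤ s}

def prioWeight (I : Inst) (A : Finset I.S) : ℕ := ∑ s ∈ A, prioRank I s

section

variable {I : Inst} {M M' : Finset (I.S × SeatT I)}

lemma SeatValid.mem_seats {v : SeatT I} (hv : SeatValid I v) : v ∈ seats I := by
  obtain ⟨_ | t, j, i⟩ := v <;> simp_all [seats, SeatValid, ηgen]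

lemma IsMatching.subset_edges (hM : IsMatching I M) : M ⊆ univ ×ˢ seats I := fun e he =>
  mem_product.2 ⟨mem_univ _, SeatValid.mem_seats (hM.1 e he).1⟩

lemma IsMatching.card_covered (hM : IsMatching I M) : #(covered I M) = #M :=
  card_image_of_injOn fun e he e' he' h => hM.2.1 e he e' he' h

lemma isMatching_empty (I : Inst) : IsMatching I ∅ := by
  simp [IsMatching]

lemma IsMatching.insert_edge (hM : IsMatching I M) {s : I.S} {v : SeatT I}
    (hv : SeatValid I v) (hsv : EdgeOK I s v) (hs : s ∉ covered I M)
    (hvM : v ∉ M.image Prod.snd) : IsMatching I (insert (s, v) M) := by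
  have hs' : ∀ e ∈ M, e.1 ≠ s := fun e he h => hs (mem_image.2 ⟨e, he, h⟩)
  have hv' : ∀ e ∈ M, e.2 ≠ v := fun e he h => hvM (mem_image.2 ⟨e, he, h⟩)
  refine ⟨?_, ?_, ?_⟩ <;> simp only [mem_insert, forall_eq_or_imp]
  · exact ⟨⟨hv, hsv⟩, hM.1⟩
  · exact ⟨⟨fun _ => trivial, fun e he h => absurd h.symm (hs' e he)⟩,
      fun e he => ⟨fun h => absurd h (hs' e he), hM.2.1 e he⟩⟩
  · exact ⟨⟨fun _ => trivial, fun e he h => absurd h.symm (hv' e he)⟩,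
      fun e he => ⟨fun h => absurd h (hv' e he), hM.2.2 e he⟩⟩

lemma IsMatching.exists_insert_general (hM : IsMatching I M) {s : I.S}
    (hs : s ∉ covered I M) (hq : #M < I.q) : ∃ v, IsMatching I (insert (s, v) M) := by
  have hgeneral : #((range I.q).image fun i => ((none, I.r, i) : SeatT I)) = I.q := by
    rw [card_image_of_injective _ fun a b h => by simpa using h, card_range]
  have hlt : #(M.image Prod.snd) < #((range I.q).image fun i => ((none, I.r, i) : SeatT I)) :=
    hgeneral.symm ▸ card_image_le.trans_lt hq
  obtain ⟨v, hv, hvM⟩ := exists_mem_notMem_of_card_lt_card hlt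
  obtain ⟨i, hi, rfl⟩ := mem_image.1 hv
  exact ⟨_, hM.insert_edge (show SeatValid I (none, I.r, i) from ⟨rfl, mem_range.1 hi⟩)
    trivial hs hvM⟩

lemma finite_setOf_isMatching (I : Inst) : {M | IsMatching I M}.Finite :=
  (univ ×ˢ seats I).powerset.finite_toSet.subset fun _ hM =>
    mem_powerset.2 (IsMatching.subset_edges hM)

lemma exists_max_image_of_isMatching {β : Type*} [LinearOrder β]
    (P : Finset (I.S × SeatT I) → Prop) (hP : ∀ M, P M → IsMatching I M) (hne : ∃ M, P M)
    (f : Finset (I.S × SeatT I) → β) : ∃ M, P M ∧ ∀ M', P M' → f M' ≤ f M :=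
  Set.exists_max_image {M | P M} f ((finite_setOf_isMatching I).subset hP) hne

lemma sigLT_iff : SigLT I M M' ↔ sigLex I M < sigLex I M' := by
  constructor
  · rintro ⟨k, hk1, hkr, heq, hlt⟩
    refine ⟨⟨k - 1, by omega⟩, fun j hj => heq _ (by omega) ?_, ?_⟩
    · have : (j : ℕ) < k - 1 := hj
      omega
    · simpa [sigLex, Nat.sub_add_cancel hk1] using hlt
  · rintro ⟨i, heq, hlt⟩
    refine ⟨i + 1, by omega, i.2, fun j hj1 hjk => ?_, hlt⟩
    have := heq ⟨j - 1, by omega⟩ (show j - 1 < (i : ℕ) by omega)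
    simpa [sigLex, Nat.sub_add_cancel hj1] using this

lemma sigLex_mono (h : M ⊆ M') : sigLex I M ≤ sigLex I M' :=
  Pi.toLex_monotone fun _ => card_le_card (filter_subset_filter _ h)

lemma covered_mono (h : M ⊆ M') : covered I M ⊆ covered I M' :=
  image_subset_image h

lemma minRatio_mono (h : M ⊆ M') : minRatio I M ≤ minRatio I M' := by
  refine Finset.le_min fun _ hx => ?_
  obtain ⟨u, hu, rfl⟩ := mem_image.1 hx
  refine (Finset.min_le (mem_image_of_mem _ hu)).trans (WithTop.coe_le_coe.2 ?_)
  gcongr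
  exact card_le_card (filter_subset_filter _ (covered_mono h))

lemma exists_rankMaximal (I : Inst) : ∃ M, RankMaximal I M := by
  obtain ⟨M, ⟨hM, hq⟩, hmax⟩ := exists_max_image_of_isMatching
    (fun M => IsMatching I M ∧ #M ≤ I.q) (fun _ h => h.1)
    ⟨∅, isMatching_empty I, by simp⟩ (sigLex I)
  exact ⟨M, hM, hq, fun M' hM' hq' => sigLT_iff.not.2 (hmax M' ⟨hM', hq'⟩).not_gt⟩

lemma exists_balancedRep (I : Inst) : ∃ M, BalancedRep I M :=
  exists_max_image_of_isMatching (RankMaximal I) (fun _ h => h.1) (exists_rankMaximal I)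
    (minRatio I)

lemma RankMaximal.of_subset (hM : RankMaximal I M) (h : M ⊆ M') (hM' : IsMatching I M')
    (hq : #M' ≤ I.q) : RankMaximal I M' :=
  ⟨hM', hq, fun N hN hNq hlt =>
    hM.2.2 N hN hNq (sigLT_iff.2 ((sigLex_mono h).trans_lt (sigLT_iff.1 hlt)))⟩

lemma BalancedRep.of_subset (hM : BalancedRep I M) (h : M ⊆ M') (hM' : IsMatching I M')
    (hq : #M' ≤ I.q) : BalancedRep I M' :=
  ⟨hM.1.of_subset h hM' hq, fun N hN => (hM.2 N hN).trans (minRatio_mono h)⟩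

lemma prioRank_pos (s : I.S) : 0 < prioRank I s :=
  card_pos.2 ⟨s, by simp⟩

lemma prioRank_strictMono : StrictMono (prioRank I) := fun a b hab =>
  card_lt_card <| (ssubset_iff_of_subset fun x hx => by
    simp only [mem_filter, mem_univ, true_and] at hx ⊢; exact hx.trans hab.le).2
      ⟨b, by simp, by simpa using hab⟩

lemma card_covered_of_max_prioWeight (hM : BalancedRep I M)
    (hmax : ∀ M', BalancedRep I M' →
      prioWeight I (covered I M') ≤ prioWeight I (covered I M)) :
    #(covered I M) = min (Fintype.card I.S) I.q := by
  have hcard := hM.1.1.card_covered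
  refine (le_min (card_le_univ _) (hcard ▸ hM.1.2.1)).antisymm ?_
  by_contra! hlt
  obtain ⟨s, -, hs⟩ :=
    exists_mem_notMem_of_card_lt_card ((lt_min_iff.1 hlt).1.trans_eq card_univ.symm)
  have hq : #M < I.q := hcard ▸ (lt_min_iff.1 hlt).2
  obtain ⟨v, hMv⟩ := hM.1.1.exists_insert_general hs hq
  have hsv : (s, v) ∉ M := fun h => hs (mem_image_of_mem Prod.fst h)
  have hle := hmax _ (hM.of_subset (subset_insert _ _) hMv
    (by rw [card_insert_of_notMem hsv]; omega))
  rw [covered, image_insert, ← covered] at hle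
  refine hle.not_gt ?_
  rw [prioWeight, prioWeight, sum_insert hs]
  exact lt_add_of_pos_left _ (prioRank_pos s)

lemma jef_covered_of_max_prioWeight
    (hmax : ∀ M', BalancedRep I M' →
      prioWeight I (covered I M') ≤ prioWeight I (covered I M)) :
    JEF I (covered I M) := by
  rintro ⟨s, s', hs, hs', hprio, -, M', hM', hsub⟩
  exact (hmax M' hM').not_gt <|
    (sum_lt_sum_exchange hs hs' (prioRank_strictMono hprio)).trans_le (sum_le_sum_of_subset hsub)

end

/-- for every instance there exists a subset `S* ⊆ S` with
`|S*| ≤ q` satisfying non-wastefulness, maximal diversity, balanced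
representation and justified envy-freeness. -/
theorem exists_good_set (I : Inst) :
    ∃ A : Finset I.S, A.card ≤ I.q ∧ NonWasteful I A ∧ MaxDiversity I A ∧
      BalancedRepSet I A ∧ JEF I A := by
  obtain ⟨M, hM, hmax⟩ := exists_max_image_of_isMatching (BalancedRep I) (fun _ h => h.1.1)
    (exists_balancedRep I) (fun M => prioWeight I (covered I M))
  have hcard := card_covered_of_max_prioWeight hM hmax
  exact ⟨covered I M, hcard.trans_le (min_le_right _ _), hcard, ⟨M, hM.1, subset_rfl⟩,
    ⟨M, hM, subset_rfl⟩, jef_covered_of_max_prioWeight hmax⟩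
end
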